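/- Fix a set C of colors, a player a, and a strict weak order ≺_a on C^ω such that for every one-player game for a (with colors in C and preference ≺_a) there exists m ∈ ℕ such that a wins her winnable threshold games in it using uniformly finite memory m. Then in every antagonistic game g with players a and b (colors in C, a's preference ≺_a, ≺_b the inverse of ≺_a), for every finite-memory strategy s_b of b: if reg ∩ γ_b(s_b) = reg ∩ Γ_b, then γ_b(s_b) = Γ_b, where reg is the set of regular (ultimately periodic) runs of g. -/

import Mathlib

namespace GG

variable {V C A : Type}

/-- Append a finite list in front of an infinite sequence. -/
def appSeq (l : List V) (ρ : ℕ → V) : ℕ → V :=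
  fun n => if n < l.length then l.getD n (ρ 0) else ρ (n - l.length)

/-- Glue two histories, identifying the last vertex of `l` with the first of `l'`. -/
def glueL (l l' : List V) : List V := l.dropLast ++ l'

/-- Glue a history with a run, identifying the last vertex of `l` with the start of `ρ`. -/
def glueR (l : List V) (ρ : ℕ → V) : ℕ → V := appSeq l.dropLast ρ

/-- Ultimately periodic (regular) sequence. -/
def UltPeriodic (ρ : ℕ → V) : Prop := ∃ k p : ℕ, 0 < p ∧ ∀ n, k ≤ n → ρ (n + p) = ρ n

/-- Strict weak order: irreflexive, transitive, with transitive incomparability. -/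
def SWO (r : (ℕ → C) → (ℕ → C) → Prop) : Prop :=
  (∀ x, ¬ r x x) ∧ (∀ x y z, r x y → r y z → r x z) ∧
    (∀ x y z, ¬ r x y → ¬ r y z → ¬ r x z)

/-- A strategy uses `m` bits of memory: it is induced by a strategic update
`σ : V × {0,1}^m → V × {0,1}^m` together with an initial memory content. -/
def UsesMem (m : ℕ) (s : List V → V) : Prop :=
  ∃ (σ : V × (Fin m → Bool) → V × (Fin m → Bool)) (M₀ : Fin m → Bool),
    ∀ (l : List V) (v : V),
      s (l ++ [v]) = (σ (v, l.foldl (fun M u => (σ (u, M)).2) M₀)).1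

/-- A finite-memory strategy. -/
def FinMem (s : List V → V) : Prop := ∃ m, UsesMem m s

/-- Regular language: recognized by a deterministic finite automaton. -/
def RegLang {α : Type} (L : Set (List α)) : Prop :=
  ∃ (Q : Type) (_ : Fintype Q) (step : Q → α → Q) (init : Q) (acc : Set Q),
    ∀ w : List α, w ∈ L ↔ w.foldl step init ∈ acc

/-- Repeat a finite word `n` times. -/
def repW (l : List C) (n : ℕ) : List C := (List.replicate n l).flatten

/-- The infinite word `u · w^ω` (with default letter `d`, unused when `w ≠ []`). -/
def extWord (d : C) (u w : List C) : ℕ → C := fun n =>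
  if n < u.length then u.getD n d else w.getD ((n - u.length) % w.length) d

/-- The regular-Mont condition for a preference on infinite color sequences. -/
def RegularMont (prec : (ℕ → C) → (ℕ → C) → Prop) : Prop :=
  ∀ (d : C) (h₀ h₁ h₂ h₃ : List C), h₁ ≠ [] → h₃ ≠ [] →
    (∀ n : ℕ, prec (extWord d (h₀ ++ repW h₁ n ++ h₂) h₃)
        (extWord d (h₀ ++ repW h₁ (n + 1) ++ h₂) h₃)) →
    prec (extWord d (h₀ ++ h₂) h₃) (extWord d h₀ h₁)

/-- The weak optimality-is-regular property of a preference. -/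
def WeakOIR (prec : (ℕ → C) → (ℕ → C) → Prop) : Prop :=
  ∀ p q : ℕ → C, UltPeriodic p → UltPeriodic q →
    ∃ M : Set (List C), RegLang M ∧ ∀ h : List C, h ∈ M ↔ prec (appSeq h p) (appSeq h q)

/-- Automatic-piecewise prefix-linearity of a preference on `C^ω` (word level). -/
def APPLword (prec : (ℕ → C) → (ℕ → C) → Prop) : Prop :=
  ∃ (Q : Type) (_ : Fintype Q) (step : Q → C → Q) (init : Q),
    ∀ h h' : List C, h.foldl step init = h'.foldl step init →
      ∀ p q : ℕ → C,
        (prec (appSeq h p) (appSeq h q) ↔ prec (appSeq h' p) (appSeq h' q))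

/-- A multi-player game played on a finite directed graph in which every
vertex has an outgoing edge. Players compare runs via color traces. -/
structure Game (V C A : Type) where
  edge : V → V → Prop
  serial : ∀ v, ∃ w, edge v w
  start : V
  owner : V → A
  color : V → C
  pref : A → (ℕ → C) → (ℕ → C) → Prop

/-- Shifted strategy `s^h`. -/
def shiftStrat (l : List V) (s : List V → V) : List V → V :=
  fun l' => s (l.dropLast ++ l')

namespace Game

variable (g : Game V C A)

def lastV (l : List V) : V := l.getLast?.getD g.start

/-- Histories: finite paths starting at the start vertex. -/
def IsHist (l : List V) : Prop :=
  l ≠ [] ∧ l.head? = some g.start ∧ l.Chain' g.edge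

/-- Runs: infinite paths starting at the start vertex. -/
def IsRun (ρ : ℕ → V) : Prop :=
  ρ 0 = g.start ∧ ∀ n, g.edge (ρ n) (ρ (n + 1))

/-- Runs are compared via their color traces. -/
def runPref (a : A) (ρ ρ' : ℕ → V) : Prop :=
  g.pref a (fun n => g.color (ρ n)) (fun n => g.color (ρ' n))

/-- Validity of a strategy on the set `P` of controlled vertices. -/
def ValidOn (P : V → Prop) (s : List V → V) : Prop :=
  ∀ l, g.IsHist l → P (g.lastV l) → g.edge (g.lastV l) (s l)

def ValidStrat (a : A) (s : List V → V) : Prop :=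
  g.ValidOn (fun v => g.owner v = a) s

/-- Validity for the coalition of all players other than `a`. -/
def ValidCo (a : A) (s : List V → V) : Prop :=
  g.ValidOn (fun v => g.owner v ≠ a) s

def _root_.GG.histUpTo (ρ : ℕ → V) (n : ℕ) : List V := (List.range (n + 1)).map ρ

def _root_.GG.CompatOn (P : V → Prop) (s : List V → V) (ρ : ℕ → V) : Prop :=
  ∀ n, P (ρ n) → ρ (n + 1) = s (GG.histUpTo ρ n)

/-- A run is compatible with a strategy of player `a`. -/
def Compat (a : A) (s : List V → V) (ρ : ℕ → V) : Prop :=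
  GG.CompatOn (fun v => g.owner v = a) s ρ

def CompatCo (a : A) (s : List V → V) (ρ : ℕ → V) : Prop :=
  GG.CompatOn (fun v => g.owner v ≠ a) s ρ

/-- `s` is a winning strategy of Player 1 (= player `a`) in the threshold game
`g_{a,ρ}`: every compatible run is strictly preferred to `ρ`. -/
def Wins1 (a : A) (ρ : ℕ → V) (s : List V → V) : Prop :=
  g.ValidStrat a s ∧ ∀ ρ', g.IsRun ρ' → g.Compat a s ρ' → g.runPref a ρ ρ'

/-- `s` is a winning strategy of Player 2 (the coalition) in the threshold game `g_{a,ρ}`. -/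
def Wins2 (a : A) (ρ : ℕ → V) (s : List V → V) : Prop :=
  g.ValidCo a s ∧ ∀ ρ', g.IsRun ρ' → g.CompatCo a s ρ' → ¬ g.runPref a ρ ρ'

/-- Player 1 wins the non-strict threshold game for `a` and `ρ` with `s`. -/
def Wins1NS (a : A) (ρ : ℕ → V) (s : List V → V) : Prop :=
  g.ValidStrat a s ∧ ∀ ρ', g.IsRun ρ' → g.Compat a s ρ' → ¬ g.runPref a ρ' ρ

/-- Player 2 wins the non-strict threshold game for `a` and `ρ` with `s`. -/
def Wins2NS (a : A) (ρ : ℕ → V) (s : List V → V) : Prop :=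
  g.ValidCo a s ∧ ∀ ρ', g.IsRun ρ' → g.CompatCo a s ρ' → g.runPref a ρ' ρ

/-- The future game `g^h` after history `l`. -/
def future (l : List V) : Game V C A where
  edge := g.edge
  serial := g.serial
  start := g.lastV l
  owner := g.owner
  color := g.color
  pref := fun a p q =>
    g.pref a (appSeq (l.dropLast.map g.color) p) (appSeq (l.dropLast.map g.color) q)

/-- The guarantee `γ_a(s)` of a strategy. -/
def gam (a : A) (s : List V → V) : Set (ℕ → V) :=
  {ρ | g.IsRun ρ ∧ ∃ ρ', g.IsRun ρ' ∧ g.Compat a s ρ' ∧ ¬ g.runPref a ρ ρ'}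

/-- The best guarantee `Γ_a`. -/
def Gam (a : A) : Set (ℕ → V) :=
  ⋂ s ∈ {s : List V → V | g.ValidStrat a s}, g.gam a s

def Optimal (a : A) (s : List V → V) : Prop := g.gam a s = g.Gam a

def OptimalAt (a : A) (s : List V → V) (l : List V) : Prop :=
  (g.future l).Optimal a (shiftStrat l s)

def SubgameOptimal (a : A) (s : List V → V) : Prop :=
  ∀ l, g.IsHist l → g.OptimalAt a s l

/-- A history is compatible with a strategy of player `a`. -/
def HistCompat (a : A) (s : List V → V) (l : List V) : Prop :=
  ∀ i : ℕ, i + 1 < l.length → g.owner (l.getD i g.start) = a →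
    l.getD (i + 1) g.start = s (l.take (i + 1))

def ConsistentOptimal (a : A) (s : List V → V) : Prop :=
  ∀ l, g.IsHist l → g.HistCompat a s l → g.OptimalAt a s l

/-- The history of the play induced by a strategy profile, up to stage `n`. -/
def playHist (prof : A → List V → V) : ℕ → List V
  | 0 => [g.start]
  | n + 1 =>
      playHist prof n ++
        [prof (g.owner (g.lastV (playHist prof n))) (playHist prof n)]

/-- The run induced by a strategy profile. -/
def play (prof : A → List V → V) : ℕ → V := fun n => g.lastV (g.playHist prof n)

/-- Nash equilibrium. -/
def IsNash [DecidableEq A] (prof : A → List V → V) : Prop :=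
  (∀ a, g.ValidStrat a (prof a)) ∧
    ∀ a s', g.ValidStrat a s' →
      ¬ g.runPref a (g.play prof) (g.play (Function.update prof a s'))

/-- Optimality of the strategy `s` of player `a` is regular using `D` bits. -/
def OptRegBits (a : A) (s : List V → V) (D : ℕ) : Prop :=
  ∃ (Q : Type) (_ : Fintype Q) (step : Q → V → Q) (init : Q) (acc : Set Q),
    Fintype.card Q ≤ 2 ^ D ∧
      ∀ l, g.IsHist l → (l.foldl step init ∈ acc ↔ g.OptimalAt a s l)

/-- Player `a` has the optimality-is-regular property in `g`. -/
def OIR (a : A) : Prop :=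
  ∀ s, g.ValidStrat a s → FinMem s →
    ∃ (Q : Type) (_ : Fintype Q) (step : Q → V → Q) (init : Q) (acc : Set Q),
      ∀ l, g.IsHist l → (l.foldl step init ∈ acc ↔ g.OptimalAt a s l)

/-- The two-player antagonistic game associated to player `a`: Player `true`
controls `V_a` with preference `≺_a`, Player `false` the remaining vertices
with the inverse preference. -/
def anta [DecidableEq A] (a : A) : Game V C Bool where
  edge := g.edge
  serial := g.serial
  start := g.start
  owner := fun v => decide (g.owner v = a)
  color := g.color
  pref := fun p x y => if p = true then g.pref a x y else g.pref a y x

/-- The cumulative glued histories `h₀⌢h₁⌢…⌢h_n`. -/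
def _root_.GG.cumul (h₀ : List V) (hs : ℕ → List V) : ℕ → List V
  | 0 => h₀
  | n + 1 => glueL (GG.cumul h₀ hs n) (hs n)

/-- The preference of player `a` is Mont in `g`. -/
def MontPref (a : A) : Prop :=
  ∀ (h₀ : List V) (ρ : ℕ → V) (hs : ℕ → List V),
    g.IsHist h₀ → UltPeriodic ρ →
    (∀ n, g.IsRun (glueR (GG.cumul h₀ hs n) ρ)) →
    (∀ n, g.runPref a (glueR (GG.cumul h₀ hs n) ρ) (glueR (GG.cumul h₀ hs (n + 1)) ρ)) →
    ∀ lim : ℕ → V,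
      (∀ n k, k < (GG.cumul h₀ hs n).dropLast.length →
        lim k = (GG.cumul h₀ hs n).dropLast.getD k g.start) →
      (∀ N, ∃ n, N < (GG.cumul h₀ hs n).dropLast.length) →
      g.runPref a (glueR h₀ ρ) lim

/-- Player `a`'s preference is automatic-piecewise prefix-linear in `g`. -/
def APPLin (a : A) : Prop :=
  ∃ (Q : Type) (_ : Fintype Q) (step : Q → V → Q) (init : Q),
    ∀ h h', g.IsHist h → g.IsHist h' →
      h.foldl step init = h'.foldl step init →
      g.lastV h = g.lastV h' ∧
        ∀ ρ ρ' : ℕ → V,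
          g.IsRun (glueR h ρ) → g.IsRun (glueR h ρ') →
          g.IsRun (glueR h' ρ) → g.IsRun (glueR h' ρ') →
          (g.runPref a (glueR h ρ) (glueR h ρ') ↔ g.runPref a (glueR h' ρ) (glueR h' ρ'))

end Game

end GG

open GG

/-!
Take the product of the arena with the memory of `s_b` and give all vertices to `a`: this is a
one-player game whose runs project onto the runs compatible with `s_b`. Given `ρ ∈ γ_b(s_b)`
witnessed by `π`, it suffices to find a *regular* witness `π'`: then `π' ∈ reg ∩ γ_b(s_b) ⊆ Γ_b`,
and `Γ_b` contains every run that is not strictly `≺_a`-above one of its members.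
Suppose every regular run of the product is `≺_a ρ`. Among the finitely many `m`-bit strategic
updates whose plays are runs, pick one with a `≺_a`-maximal play. That play is regular, hence
`≺_a ρ`, hence `≺_a π`; so following `π` wins the threshold game above it, and by hypothesis an
`m`-bit strategy wins it too, whose play beats the maximal one.
-/

namespace GG

variable {V C A : Type}

theorem SWO.swap {r : (ℕ → C) → (ℕ → C) → Prop} (h : SWO r) : SWO fun x y => r y x :=
  ⟨h.1, fun x y z hxy hyz => h.2.1 z y x hyz hxy, fun x y z hxy hyz => h.2.2 z y x hyz hxy⟩

theorem UltPeriodic.comp {B : Type} {ρ : ℕ → V} (h : UltPeriodic ρ) (f : V → B) :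
    UltPeriodic (f ∘ ρ) := by
  obtain ⟨k, p, hp, hper⟩ := h
  exact ⟨k, p, hp, fun n hn => congrArg f (hper n hn)⟩

theorem ultPeriodic_iterate {X : Type} [Finite X] (f : X → X) (x : X) :
    UltPeriodic fun n => f^[n] x := by
  obtain ⟨i, j, hne, heq⟩ := Finite.exists_ne_map_eq_of_infinite fun n : ℕ => f^[n] x
  wlog hij : i < j generalizing i j
  · exact this j i hne.symm heq.symm (by omega)
  refine ⟨i, j - i, by omega, fun n hn => ?_⟩
  dsimp only
  rw [show n + (j - i) = (n - i) + j by omega, Function.iterate_add_apply, ← heq,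
    ← Function.iterate_add_apply, Nat.sub_add_cancel hn]

theorem Finite.exists_forall_not_rel {α : Type} [Finite α] {r : α → α → Prop}
    (htrans : ∀ x y z, r x y → r y z → r x z) (hirr : ∀ x, ¬ r x x)
    {s : Set α} (hs : s.Nonempty) : ∃ x ∈ s, ∀ y ∈ s, ¬ r x y := by
  have : IsTrans α (Function.swap r) := ⟨fun x y z hxy hyz => htrans z y x hyz hxy⟩
  have : Std.Irrefl (Function.swap r) := ⟨hirr⟩
  exact (Finite.wellFounded_of_trans_of_irrefl (Function.swap r)).has_min s hs

theorem histUpTo_eq_append (ρ : ℕ → V) (n : ℕ) :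
    histUpTo ρ n = (List.range n).map ρ ++ [ρ n] := by
  simp [histUpTo, List.range_succ]

theorem length_histUpTo (ρ : ℕ → V) (n : ℕ) : (histUpTo ρ n).length = n + 1 := by
  simp [histUpTo]

def memFold {M : Type} (σ : V × M → V × M) (M₀ : M) (l : List V) : M :=
  l.foldl (fun M u => (σ (u, M)).2) M₀

theorem memFold_append_singleton {M : Type} (σ : V × M → V × M) (M₀ : M) (l : List V) (v : V) :
    memFold σ M₀ (l ++ [v]) = (σ (v, memFold σ M₀ l)).2 := by
  simp [memFold]

/-- `UsesMem m s` unfolds to `∃ σ M₀, Induces σ M₀ s` with memory `Fin m → Bool`. -/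
def Induces {M : Type} (σ : V × M → V × M) (M₀ : M) (s : List V → V) : Prop :=
  ∀ l v, s (l ++ [v]) = (σ (v, memFold σ M₀ l)).1

theorem snd_iterate_eq_memFold {M : Type} (σ : V × M → V × M) (v₀ : V) (M₀ : M) (n : ℕ) :
    (σ^[n] (v₀, M₀)).2 = memFold σ M₀ ((List.range n).map fun k => (σ^[k] (v₀, M₀)).1) := by
  induction n with
  | zero => rfl
  | succ n ih =>
    rw [List.range_succ, List.map_append, List.map_singleton, memFold_append_singleton, ← ih,
      Function.iterate_succ_apply']

theorem Induces.fst_iterate_succ {M : Type} {σ : V × M → V × M} {M₀ : M} {s : List V → V}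
    (hs : Induces σ M₀ s) (v₀ : V) (n : ℕ) :
    (σ^[n + 1] (v₀, M₀)).1 = s (histUpTo (fun k => (σ^[k] (v₀, M₀)).1) n) := by
  rw [histUpTo_eq_append, hs, ← snd_iterate_eq_memFold, Function.iterate_succ_apply']

namespace Game

variable {g : Game V C A}

theorem lastV_histUpTo (g : Game V C A) (ρ : ℕ → V) (n : ℕ) : g.lastV (histUpTo ρ n) = ρ n := by
  simp [lastV, histUpTo_eq_append]

theorem isHist_histUpTo {ρ : ℕ → V} (h0 : ρ 0 = g.start) {n : ℕ}
    (he : ∀ k < n, g.edge (ρ k) (ρ (k + 1))) : g.IsHist (histUpTo ρ n) :=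
  ⟨by simp [histUpTo], by simp [histUpTo, List.range_succ_eq_map, h0],
    (List.isChain_map ρ).2 ((List.isChain_range_succ _ n).2 he)⟩

theorem IsRun.isHist_histUpTo {ρ : ℕ → V} (h : g.IsRun ρ) (n : ℕ) : g.IsHist (histUpTo ρ n) :=
  Game.isHist_histUpTo h.1 fun k _ => h.2 k

theorem isRun_of_eq_strategy {s : List V → V} (hv : ∀ l, g.IsHist l → g.edge (g.lastV l) (s l))
    {ρ : ℕ → V} (h0 : ρ 0 = g.start) (hρ : ∀ n, ρ (n + 1) = s (histUpTo ρ n)) : g.IsRun ρ := by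
  refine ⟨h0, fun n => ?_⟩
  induction n using Nat.strong_induction_on with
  | _ n ih =>
    have := hv _ (isHist_histUpTo h0 ih)
    rwa [lastV_histUpTo, ← hρ] at this

theorem mem_gam_of_compat {a : A} {s : List V → V} (hirr : ∀ x, ¬ g.pref a x x) {ρ : ℕ → V}
    (hρ : g.IsRun ρ) (hc : g.Compat a s ρ) : ρ ∈ g.gam a s :=
  ⟨hρ, ρ, hρ, hc, hirr _⟩

theorem mem_Gam_of_not_runPref {a : A} (hswo : SWO (g.pref a)) {ρ ρ' : ℕ → V} (hρ : g.IsRun ρ)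
    (hρ' : ρ' ∈ g.Gam a) (h : ¬ g.runPref a ρ ρ') : ρ ∈ g.Gam a := by
  simp only [Gam, Set.mem_iInter] at hρ' ⊢
  intro s hs
  obtain ⟨-, π, hπ, hc, hπρ'⟩ := hρ' s hs
  exact ⟨hρ, π, hπ, hc, hswo.2.2 _ _ _ h hπρ'⟩

open Classical in
noncomputable def follow (g : Game V C A) (π : ℕ → V) : List V → V := fun l =>
  if g.edge (g.lastV l) (π l.length) then π l.length else (g.serial (g.lastV l)).choose

theorem edge_follow (g : Game V C A) (π : ℕ → V) (l : List V) :
    g.edge (g.lastV l) (g.follow π l) := by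
  unfold follow
  split_ifs with h
  · exact h
  · exact (g.serial _).choose_spec

theorem eq_of_compat_follow {a : A} (howner : ∀ v, g.owner v = a) {π ρ : ℕ → V}
    (hπ : g.IsRun π) (hρ : g.IsRun ρ) (hc : g.Compat a (g.follow π) ρ) : ρ = π := by
  funext n
  induction n with
  | zero => rw [hρ.1, hπ.1]
  | succ n ih =>
    have hedge : g.edge (g.lastV (histUpTo ρ n)) (π (histUpTo ρ n).length) := by
      rw [lastV_histUpTo, length_histUpTo, ih]
      exact hπ.2 n
    rw [hc n (howner _), follow, if_pos hedge, length_histUpTo]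

theorem wins1_follow {a : A} (howner : ∀ v, g.owner v = a) {π ρ : ℕ → V} (hπ : g.IsRun π)
    (h : g.runPref a ρ π) : g.Wins1 a ρ (g.follow π) :=
  ⟨fun l _ _ => g.edge_follow π l, fun _ hρ' hc => eq_of_compat_follow howner hπ hρ' hc ▸ h⟩

theorem exists_ultPeriodic_not_pref [Finite V] {a : A} (howner : ∀ v, g.owner v = a)
    (hswo : SWO (g.pref a)) {m : ℕ}
    (hm : ∀ ρ, g.IsRun ρ → (∃ s, g.Wins1 a ρ s) → ∃ s, g.Wins1 a ρ s ∧ UsesMem m s)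
    {π : ℕ → V} (hπ : g.IsRun π) {τ : ℕ → C} (hπτ : ¬ g.pref a (fun n => g.color (π n)) τ) :
    ∃ ρ, g.IsRun ρ ∧ UltPeriodic ρ ∧ ¬ g.pref a (fun n => g.color (ρ n)) τ := by
  by_contra! hcon
  let play : (V × (Fin m → Bool) → V × (Fin m → Bool)) × (Fin m → Bool) → ℕ → V :=
    fun t n => (t.1^[n] (g.start, t.2)).1
  have improve : ∀ t, g.IsRun (play t) →
      ∃ t', g.IsRun (play t') ∧ g.runPref a (play t) (play t') := by
    intro t ht
    have hlt : g.runPref a (play t) π := by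
      by_contra h
      exact hswo.2.2 _ _ _ h hπτ (hcon _ ht ((ultPeriodic_iterate _ _).comp Prod.fst))
    obtain ⟨s, ⟨hvs, hwin⟩, σ, M₀, hs⟩ := hm _ ht ⟨_, wins1_follow howner hπ hlt⟩
    have hplay : ∀ n, play (σ, M₀) (n + 1) = s (histUpTo (play (σ, M₀)) n) :=
      Induces.fst_iterate_succ hs g.start
    have hrun : g.IsRun (play (σ, M₀)) :=
      isRun_of_eq_strategy (fun l hl => hvs l hl (howner _)) rfl hplay
    exact ⟨(σ, M₀), hrun, hwin _ hrun fun n _ => hplay n⟩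
  have hstart : g.IsRun (play (fun x => ((g.serial x.1).choose, x.2), fun _ => false)) :=
    ⟨rfl, fun n => by
      simp only [play, Function.iterate_succ_apply']
      exact (g.serial _).choose_spec⟩
  obtain ⟨t, ht, hmax⟩ := Finite.exists_forall_not_rel
    (r := fun t t' => g.runPref a (play t) (play t')) (s := {t | g.IsRun (play t)})
    (fun _ _ _ => hswo.2.1 _ _ _) (fun _ => hswo.1 _) ⟨_, hstart⟩
  obtain ⟨t', ht', hlt⟩ := improve t ht
  exact hmax t' ht' hlt

/-- A vertex `(v, M)` stores the memory `M` of `false`'s strategy reached before entering `v`.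
The premise `g.edge x.1 (σ x).1` keeps the arena serial where `σ` proposes an illegal move. -/
def withMemory (g : Game V C Bool) {M : Type} (σ : V × M → V × M) (M₀ : M)
    (prec : (ℕ → C) → (ℕ → C) → Prop) : Game (V × M) C Bool where
  edge x y := g.edge x.1 y.1 ∧ y.2 = (σ x).2 ∧
    (g.owner x.1 = false → g.edge x.1 (σ x).1 → y.1 = (σ x).1)
  serial x := by
    by_cases h : g.owner x.1 = false ∧ g.edge x.1 (σ x).1
    · exact ⟨σ x, h.2, rfl, fun _ _ => rfl⟩
    · exact ⟨((g.serial x.1).choose, (σ x).2), (g.serial x.1).choose_spec, rfl,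
        fun h₁ h₂ => absurd ⟨h₁, h₂⟩ h⟩
  start := (g.start, M₀)
  owner _ := true
  color x := g.color x.1
  pref _ := prec

section withMemory

variable {g : Game V C Bool} {M : Type} {σ : V × M → V × M} {M₀ : M}
  {prec : (ℕ → C) → (ℕ → C) → Prop}

theorem IsRun.snd_eq_memFold {ρ : ℕ → V × M} (h : (g.withMemory σ M₀ prec).IsRun ρ) (n : ℕ) :
    (ρ n).2 = memFold σ M₀ ((List.range n).map fun k => (ρ k).1) := by
  induction n with
  | zero => rw [h.1]; rfl
  | succ n ih =>
    rw [List.range_succ, List.map_append, List.map_singleton, memFold_append_singleton, ← ih,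
      (h.2 n).2.1]

theorem IsRun.fst_of_withMemory {sb : List V → V} (hvsb : g.ValidStrat false sb)
    (hsb : Induces σ M₀ sb) {ρ : ℕ → V × M} (h : (g.withMemory σ M₀ prec).IsRun ρ) :
    g.IsRun (fun n => (ρ n).1) ∧ g.Compat false sb (fun n => (ρ n).1) := by
  have hrun : g.IsRun (fun n => (ρ n).1) := ⟨congrArg Prod.fst h.1, fun n => (h.2 n).1⟩
  refine ⟨hrun, fun n hn => ?_⟩
  have hsbn : sb (histUpTo (fun k => (ρ k).1) n) = (σ (ρ n)).1 := by
    rw [histUpTo_eq_append, hsb, ← h.snd_eq_memFold]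
  have hlegal := hvsb _ (hrun.isHist_histUpTo n) (by rwa [lastV_histUpTo])
  rw [lastV_histUpTo, hsbn] at hlegal
  rw [hsbn]
  exact (h.2 n).2.2 hn hlegal

theorem IsRun.withMemory {sb : List V → V} (hsb : Induces σ M₀ sb) {π : ℕ → V}
    (hπ : g.IsRun π) (hc : g.Compat false sb π) :
    (g.withMemory σ M₀ prec).IsRun fun n => (π n, memFold σ M₀ ((List.range n).map π)) := by
  refine ⟨Prod.ext hπ.1 rfl, fun n => ⟨hπ.2 n, ?_, fun hn _ => ?_⟩⟩
  · dsimp only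
    rw [List.range_succ, List.map_append, List.map_singleton, memFold_append_singleton]
  · dsimp only at hn ⊢
    rw [hc n hn, histUpTo_eq_append, hsb]

end withMemory

end Game

end GG

/-- Lemma 4.4.2: under uniform finite-memory winning of `a`'s winnable threshold
games in one-player games, a finite-memory strategy of `b` whose guarantee agrees
with the best guarantee on regular runs realizes the best guarantee. -/
theorem stmt9
    {C : Type}
    (prec : (ℕ → C) → (ℕ → C) → Prop) (hswo : GG.SWO prec)
    (hone : ∀ (V' : Type) [Fintype V'] (g' : GG.Game V' C Bool),
      (∀ v, g'.owner v = true) → g'.pref true = prec →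
      ∃ m, ∀ ρ, g'.IsRun ρ → (∃ s, g'.Wins1 true ρ s) →
        ∃ s, g'.Wins1 true ρ s ∧ GG.UsesMem m s) :
    ∀ (V : Type) [Fintype V] (g : GG.Game V C Bool),
      g.pref true = prec → (∀ p q, g.pref false p q ↔ prec q p) →
      ∀ sb, g.ValidStrat false sb → GG.FinMem sb →
        ({ρ | GG.UltPeriodic ρ} ∩ g.gam false sb =
          {ρ | GG.UltPeriodic ρ} ∩ g.Gam false) →
        g.gam false sb = g.Gam false := by
  intro V _ g _ hpf sb hvsb ⟨mb, σ, M₀, hsb⟩ hreg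
  have hswo' : SWO (g.pref false) := by
    rw [show g.pref false = fun p q => prec q p from funext₂ fun p q => propext (hpf p q)]
    exact hswo.swap
  refine Set.Subset.antisymm ?_ (Set.biInter_subset_of_mem hvsb)
  rintro ρ ⟨hρ, π, hπ, hπc, hρπ⟩
  obtain ⟨m, hm⟩ := hone _ (g.withMemory σ M₀ prec) (fun _ => rfl) rfl
  obtain ⟨ρ', hρ'run, hρ'reg, hρ'ρ⟩ := Game.exists_ultPeriodic_not_pref (fun _ => rfl) hswo hm
    (hπ.withMemory hsb hπc) (τ := fun n => g.color (ρ n)) ((hpf _ _).not.1 hρπ)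
  obtain ⟨hrun, hcompat⟩ := hρ'run.fst_of_withMemory hvsb hsb
  have hΓ : (fun n => (ρ' n).1) ∈ g.Gam false :=
    (hreg ▸ ⟨hρ'reg.comp Prod.fst, g.mem_gam_of_compat hswo'.1 hrun hcompat⟩ :
      (fun n => (ρ' n).1) ∈ {ρ | UltPeriodic ρ} ∩ g.Gam false).2
  exact g.mem_Gam_of_not_runPref hswo' hρ hΓ ((hpf _ _).not.2 hρ'ρ)
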